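/- arXiv:0902.2624 — 5 statements merged into one kernel-verified Lean document; each statement's English description precedes it below -/
import Mathlib

section
/- Let A be the 2×2 real matrix with entries a, b (top row) and c, d (bottom row), with a ≠ 0, and let C > 0. If C·|c/a| < 1 and (|d| + |b|/C)/(|a| - C·|c|) ≤ 1, then for every vector (ξ, η) such that A(ξ, η) = (ξ', η') satisfies |ξ'| ≤ C|η'|, we have |ξ| ≤ C|η|. In other words, the preimage under A of the cone K_C = {(x,y) : |x| ≤ C|y|} is contained in K_C. -/
/-- Cone invariance lemma (Lemma `cone-linear` in the paper): if
`C·|c/a| < 1` and `(|d| + |b|/C)/(|a| − C·|c|) ≤ 1`, then the preimage under the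
linear map `(ξ, η) ↦ (a·ξ + b·η, c·ξ + d·η)` of the cone `{(x,y) : |x| ≤ C·|y|}`
is contained in the cone. -/
theorem stmt_0 (a b c d C : ℝ) (ha : a ≠ 0) (hC : 0 < C)
    (h1 : C * |c / a| < 1) (h2 : (|d| + |b| / C) / (|a| - C * |c|) ≤ 1)
    (ξ η : ℝ) (hcone : |a * ξ + b * η| ≤ C * |c * ξ + d * η|) :
    |ξ| ≤ C * |η| := by
  have haa : 0 < |a| := abs_pos.mpr ha
  rw [abs_div] at h1
  have h0 : C * |c| < |a| := by
    rw [← mul_div_assoc] at h1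
    have := (div_lt_one haa).mp h1
    linarith
  have h2' : |d| + |b| / C ≤ |a| - C * |c| := by
    rwa [div_le_one (by linarith)] at h2
  have t1 : |a * ξ| ≤ |a * ξ + b * η| + |b * η| := by
    calc |a * ξ| = |(a * ξ + b * η) + (-(b * η))| := by ring_nf
    _ ≤ |a * ξ + b * η| + |-(b * η)| := abs_add_le _ _
    _ = |a * ξ + b * η| + |b * η| := by rw [abs_neg]
  have t2 : |c * ξ + d * η| ≤ |c * ξ| + |d * η| := abs_add_le _ _
  rw [abs_mul, abs_mul b η] at t1
  rw [abs_mul] at t2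
  rw [abs_mul] at t2
  have hξ : 0 ≤ |ξ| := abs_nonneg ξ
  have hη : 0 ≤ |η| := abs_nonneg η
  have hb : 0 ≤ |b| := abs_nonneg b
  have hbC : |b| / C * C = |b| := div_mul_cancel₀ _ hC.ne'
  nlinarith [mul_le_mul_of_nonneg_left t2 hC.le, mul_le_mul_of_nonneg_right (mul_le_mul_of_nonneg_left h2' hC.le) hη, hcone]
end

section
/- For every N ≥ 1, the set Σ'_N of sequences in {0,1}^ℕ obtained as shifts of infinite concatenations of blocks from B(N) = {A ∈ {0,1}^{2N} : ∑ A_k = N} is contained in Σ_{2N} = {α : for all p ≤ q, |∑_{k=p}^{q}(α_k − 1/2)| ≤ 2N}. -/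
/-- The set `Σ_M` of binary sequences all of whose partial sums
`∑_{k=p}^{q} (α_k − 1/2)` are bounded by `M` in absolute value. -/
def SigmaM (M : ℕ) : Set (ℕ → Bool) :=
  {α | ∀ p q : ℕ, p ≤ q →
    |∑ k ∈ Finset.Icc p q, ((if α k then (1 : ℝ) else 0) - 1/2)| ≤ M}

/-- `Σ'_N`: all shifts (by `j < 2N`) of infinite concatenations of blocks of
length `2N` containing exactly `N` ones. -/
def SigmaPrime (N : ℕ) : Set (ℕ → Bool) :=
  {α | ∃ j < 2 * N, ∃ β : ℕ → Bool,
    (∀ m : ℕ, (Finset.range (2 * N)).sum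
        (fun k => if β (2 * N * m + k) then (1 : ℕ) else 0) = N) ∧
    α = fun n => β (n + j)}

/-- For every `N ≥ 1`, `Σ'_N ⊆ Σ_{2N}`. -/
theorem stmt_8 (N : ℕ) (hN : 1 ≤ N) : SigmaPrime N ⊆ SigmaM (2 * N) := by
  rintro α ⟨j, hj, β, hβ, rfl⟩
  set g : ℕ → ℝ := fun k => (if β k then (1:ℝ) else 0) - 1/2 with hg
  set S : ℕ → ℝ := fun n => ∑ k ∈ Finset.range n, g k with hS
  -- partial block sums are between -N and N
  have hpartial : ∀ m r, r ≤ 2 * N → |∑ k ∈ Finset.range r, g (2*N*m + k)| ≤ N := by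
    intro m r hr
    set s : ℕ := ∑ k ∈ Finset.range r, (if β (2*N*m + k) then (1:ℕ) else 0) with hs
    have hsN : s ≤ N := by
      rw [← hβ m]
      exact Finset.sum_le_sum_of_subset (Finset.range_subset_range.mpr hr)
    have hcast : ∑ k ∈ Finset.range r, (if β (2*N*m + k) then (1:ℝ) else 0) = (s:ℝ) := by
      rw [hs]; push_cast; apply Finset.sum_congr rfl; intro k _; split <;> simp
    have hsum : ∑ k ∈ Finset.range r, g (2*N*m + k) = (s:ℝ) - r/2 := by
      simp only [hg, Finset.sum_sub_distrib, hcast, Finset.sum_const, Finset.card_range]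
      ring
    rw [hsum, abs_le]
    constructor
    · have h1 : (r:ℝ) ≤ 2*N := by exact_mod_cast hr
      have : (0:ℝ) ≤ s := Nat.cast_nonneg s
      nlinarith
    · have : (s:ℝ) ≤ N := by exact_mod_cast hsN
      have : (0:ℝ) ≤ r := Nat.cast_nonneg r
      nlinarith [(Nat.cast_nonneg r : (0:ℝ) ≤ r), (show (s:ℝ) ≤ N by exact_mod_cast hsN)]
  -- block boundaries: S (2N*m) = 0
  have hblock : ∀ m, ∑ k ∈ Finset.range (2*N), g (2*N*m + k) = 0 := by
    intro m
    have hcast : ∑ k ∈ Finset.range (2*N), (if β (2*N*m + k) then (1:ℝ) else 0) = (N:ℝ) := by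
      have := hβ m
      calc ∑ k ∈ Finset.range (2*N), (if β (2*N*m + k) then (1:ℝ) else 0)
          = ((∑ k ∈ Finset.range (2*N), (if β (2*N*m + k) then (1:ℕ) else 0) : ℕ) : ℝ) := by
            push_cast; apply Finset.sum_congr rfl; intro k _; split <;> simp
        _ = (N:ℝ) := by rw [this]
    simp only [hg, Finset.sum_sub_distrib, hcast, Finset.sum_const, Finset.card_range]
    ring
  have hS0 : ∀ m, S (2*N*m) = 0 := by
    intro m
    induction m with
    | zero => simp [hS]
    | succ m ih =>
      have ih' : ∑ k ∈ Finset.range (2*N*m), g k = 0 := ih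
      have : 2*N*(m+1) = 2*N*m + 2*N := by ring
      show ∑ k ∈ Finset.range (2*N*(m+1)), g k = 0
      rw [this, Finset.sum_range_add, ih', hblock m, zero_add]
  -- |S n| ≤ N for all n
  have hSbound : ∀ n, |S n| ≤ N := by
    intro n
    obtain ⟨m, r, hr, rfl⟩ : ∃ m r, r < 2*N ∧ n = 2*N*m + r := by
      refine ⟨n / (2*N), n % (2*N), Nat.mod_lt _ (by omega), (Nat.div_add_mod n (2*N)).symm⟩
    have h0 : ∑ k ∈ Finset.range (2*N*m), g k = 0 := hS0 m
    show |∑ k ∈ Finset.range (2*N*m + r), g k| ≤ (N:ℝ)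
    rw [Finset.sum_range_add, h0, zero_add]
    exact hpartial m r hr.le
  -- conclude
  intro p q hpq
  have hsum : ∑ k ∈ Finset.Icc p q, ((if β (k + j) then (1:ℝ) else 0) - 1/2)
      = S (q + 1 + j) - S (p + j) := by
    have h1 : ∑ k ∈ Finset.Icc p q, g (k + j) = ∑ k ∈ Finset.Ico (p+j) (q+1+j), g k := by
      rw [← Finset.Ico_add_one_right_eq_Icc, ← Finset.sum_Ico_add]
      exact Finset.sum_congr rfl (fun x _ => by rw [add_comm])
    rw [show (∑ k ∈ Finset.Icc p q, ((if β (k + j) then (1:ℝ) else 0) - 1/2))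
        = ∑ k ∈ Finset.Icc p q, g (k + j) from rfl, h1,
      Finset.sum_Ico_eq_sub _ (by omega)]
  simp only [SigmaM, Set.mem_setOf_eq]
  rw [hsum]
  calc |S (q+1+j) - S (p+j)| ≤ |S (q+1+j)| + |S (p+j)| := abs_sub _ _
    _ ≤ (N:ℝ) + N := add_le_add (hSbound _) (hSbound _)
    _ = ((2*N : ℕ) : ℝ) := by push_cast; ring
end

section
/- The topological entropy of the subshift Σ_M = {α ∈ {0,1}^ℕ : for all p ≤ q, |∑_{k=p}^{q}(α_k − 1/2)| ≤ M} converges to log 2 as M → ∞. -/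
/-- The number of words of length `n` appearing in sequences of `X`. -/
noncomputable def wordCount (X : Set (ℕ → Bool)) (n : ℕ) : ℕ :=
  Nat.card {w : Fin n → Bool // ∃ α ∈ X, ∀ i : Fin n, α (i : ℕ) = w i}

/-- The topological entropy of a subshift `X ⊆ {0,1}^ℕ`:
`lim_n (1/n)·log(number of words of length n appearing in X)`. -/
noncomputable def subshiftEntropy (X : Set (ℕ → Bool)) : ℝ :=
  Filter.atTop.limsup fun n : ℕ => Real.log (wordCount X n) / n



namespace Stmt9Aux

/-- number of `true`s in a word -/
def ones {N : ℕ} (w : Fin N → Bool) : ℕ := ∑ k, if w k then 1 else 0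

lemma ones_eq_card {N : ℕ} (w : Fin N → Bool) :
    ones w = (Finset.univ.filter fun k => w k = true).card := by
  rw [ones, Finset.card_filter]

lemma card_balanced (N m : ℕ) :
    Nat.card {w : Fin N → Bool // ones w = m} = N.choose m := by
  have e : {w : Fin N → Bool // ones w = m} ≃ {s : Finset (Fin N) // s.card = m} := by
    refine ⟨fun w => ⟨Finset.univ.filter fun k => w.1 k = true, by
        rw [← ones_eq_card]; exact w.2⟩,
      fun s => ⟨fun k => decide (k ∈ s.1), by
        rw [ones_eq_card]
        rw [show (Finset.univ.filter fun k => (decide (k ∈ s.1)) = true) = s.1 by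
          ext k; simp]
        exact s.2⟩, ?_, ?_⟩
    · rintro ⟨w, hw⟩
      ext k
      simp
    · rintro ⟨s, hs⟩
      ext k
      simp
  rw [Nat.card_congr e, Nat.card_eq_fintype_card, Fintype.card_finset_len,
    Fintype.card_fin]

/-- the alternating word, which is balanced -/
def alt (m : ℕ) : Fin (2 * m) → Bool := fun r => decide (r.val % 2 = 0)

lemma sum_range_even (m : ℕ) : (∑ r ∈ Finset.range (2*m), if r % 2 = 0 then 1 else 0) = m := by
  induction m with
  | zero => simp
  | succ n ih =>
    rw [show 2*(n+1) = 2*n + 1 + 1 by ring, Finset.sum_range_succ, Finset.sum_range_succ, ih]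
    have h1 : (2*n) % 2 = 0 := by omega
    have h2 : (2*n+1) % 2 = 1 := by omega
    simp [h1, h2]

lemma ones_alt (m : ℕ) : ones (alt m) = m := by
  rw [ones]
  simp only [alt, decide_eq_true_eq]
  rw [Fin.sum_univ_eq_sum_range (fun r => if r % 2 = 0 then (1:ℕ) else 0)]
  exact sum_range_even m

end Stmt9Aux

namespace Stmt9Aux

variable {m j : ℕ}

/-- block functions: the first `j` blocks from `b`, then alternating -/
def blockFun (m j : ℕ) (b : Fin j → (Fin (2*m) → Bool)) : ℕ → Fin (2*m) → Bool :=
  fun i => if h : i < j then b ⟨i, h⟩ else alt m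

/-- the concatenated sequence -/
def blockSeq (m j : ℕ) (hm : 0 < m) (b : Fin j → (Fin (2*m) → Bool)) : ℕ → Bool :=
  fun k => blockFun m j b (k / (2*m)) ⟨k % (2*m), Nat.mod_lt _ (by omega)⟩

lemma blockSeq_apply (hm : 0 < m) (b : Fin j → (Fin (2*m) → Bool)) (i r : ℕ) (hr : r < 2*m) :
    blockSeq m j hm b (2*m*i + r) = blockFun m j b i ⟨r, hr⟩ := by
  have h1 : (2*m*i + r) / (2*m) = i := by
    rw [Nat.mul_add_div (by omega), Nat.div_eq_of_lt hr]; ring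
  have h2 : (2*m*i + r) % (2*m) = r := by
    rw [Nat.mul_add_mod, Nat.mod_eq_of_lt hr]
  simp only [blockSeq, h1, h2]

/-- the weight function -/
noncomputable def g (α : ℕ → Bool) (k : ℕ) : ℝ := (if α k then (1:ℝ) else 0) - 1/2

lemma abs_g_le (α : ℕ → Bool) (k : ℕ) : |g α k| ≤ 1/2 := by
  rw [g]; split <;> norm_num [abs_of_nonneg]

lemma abs_sum_g_le (α : ℕ → Bool) (a b : ℕ) :
    |∑ k ∈ Finset.Ico a b, g α k| ≤ (b - a : ℕ) / 2 := by
  calc |∑ k ∈ Finset.Ico a b, g α k| ≤ ∑ k ∈ Finset.Ico a b, |g α k| :=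
        Finset.abs_sum_le_sum_abs _ _
    _ ≤ ∑ k ∈ Finset.Ico a b, (1/2 : ℝ) := Finset.sum_le_sum fun k _ => abs_g_le α k
    _ = (b - a : ℕ) / 2 := by rw [Finset.sum_const, Nat.card_Ico]; ring

lemma sum_block (hm : 0 < m) (b : Fin j → (Fin (2*m) → Bool))
    (hb : ∀ i, ones (b i) = m) (i : ℕ) :
    ∑ k ∈ Finset.Ico (2*m*i) (2*m*i + 2*m), g (blockSeq m j hm b) k = 0 := by
  rw [Finset.sum_Ico_eq_sum_range]
  have hsimp : ∀ r ∈ Finset.range (2*m*i + 2*m - 2*m*i),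
      g (blockSeq m j hm b) (2*m*i + r)
        = (if blockFun m j b i ⟨r % (2*m), Nat.mod_lt _ (by omega)⟩ then (1:ℝ) else 0) - 1/2 := by
    intro r hr
    rw [Finset.mem_range] at hr
    have hr' : r < 2*m := by omega
    rw [g, blockSeq_apply hm b i r hr']
    have he : (⟨r % (2*m), Nat.mod_lt _ (by omega)⟩ : Fin (2*m)) = ⟨r, hr'⟩ :=
      Fin.ext (Nat.mod_eq_of_lt hr')
    rw [he]
  rw [Finset.sum_congr rfl hsimp]
  have hlen : 2*m*i + 2*m - 2*m*i = 2*m := by omega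
  rw [hlen]
  rw [Finset.sum_sub_distrib]
  have hones : ones (blockFun m j b i) = m := by
    rw [blockFun]
    split
    · exact hb _
    · exact ones_alt m
  have : (∑ r ∈ Finset.range (2*m),
      (if blockFun m j b i ⟨r % (2*m), Nat.mod_lt _ (by omega)⟩ then (1:ℝ) else 0)) = m := by
    rw [← Fin.sum_univ_eq_sum_range
      (fun r => if blockFun m j b i ⟨r % (2*m), Nat.mod_lt _ (by omega)⟩ then (1:ℝ) else 0)]
    have hk : ∀ k : Fin (2*m),
        (if blockFun m j b i ⟨k.val % (2*m), Nat.mod_lt _ (by omega)⟩ then (1:ℝ) else 0)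
          = (((if blockFun m j b i k then (1:ℕ) else 0) : ℕ) : ℝ) := by
      intro k
      have he : (⟨k.val % (2*m), Nat.mod_lt _ (by omega)⟩ : Fin (2*m)) = k :=
        Fin.ext (Nat.mod_eq_of_lt k.isLt)
      rw [he]
      split <;> simp
    rw [Finset.sum_congr rfl (fun k _ => hk k), ← Nat.cast_sum]
    rw [show (∑ k, if blockFun m j b i k then (1:ℕ) else 0) = ones (blockFun m j b i) from rfl,
      hones]
  rw [this]
  simp
  ring

end Stmt9Aux

namespace Stmt9Aux

/-- prefix sums at block boundaries vanish -/
lemma sum_range_block (hm : 0 < m) (b : Fin j → (Fin (2*m) → Bool))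
    (hb : ∀ i, ones (b i) = m) (i : ℕ) :
    ∑ k ∈ Finset.range (2*m*i), g (blockSeq m j hm b) k = 0 := by
  induction i with
  | zero => simp
  | succ n ih =>
    have hle : 2*m*n ≤ 2*m*(n+1) := by nlinarith
    rw [Finset.range_eq_Ico, ← Finset.sum_Ico_consecutive _ (Nat.zero_le _) hle,
      ← Finset.range_eq_Ico, ih]
    have : 2*m*(n+1) = 2*m*n + 2*m := by ring
    rw [this, sum_block hm b hb n, zero_add]

lemma abs_sum_range_le (hm : 0 < m) (b : Fin j → (Fin (2*m) → Bool))
    (hb : ∀ i, ones (b i) = m) (t : ℕ) :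
    |∑ k ∈ Finset.range t, g (blockSeq m j hm b) k| ≤ (m : ℝ) / 2 := by
  set α := blockSeq m j hm b with hα
  obtain ⟨i, r, hr, ht⟩ : ∃ i r, r < 2*m ∧ t = 2*m*i + r :=
    ⟨t/(2*m), t%(2*m), Nat.mod_lt _ (by omega), (Nat.div_add_mod t (2*m)).symm⟩
  have hmul : 2*m*(i+1) = 2*m*i + 2*m := by ring
  have hle1 : 2*m*i ≤ t := by omega
  have hle2 : t ≤ 2*m*(i+1) := by omega
  rcases le_or_gt r m with h | h
  · have h1 : ∑ k ∈ Finset.range t, g α k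
        = (∑ k ∈ Finset.range (2*m*i), g α k) + ∑ k ∈ Finset.Ico (2*m*i) t, g α k := by
      simp only [Finset.range_eq_Ico]
      exact (Finset.sum_Ico_consecutive _ (Nat.zero_le _) hle1).symm
    rw [h1, sum_range_block hm b hb i, zero_add]
    calc |∑ k ∈ Finset.Ico (2*m*i) t, g α k| ≤ ((t - 2*m*i : ℕ) : ℝ) / 2 := abs_sum_g_le α _ _
      _ ≤ (m:ℝ)/2 := by
        have h2 : (t - 2*m*i : ℕ) ≤ m := by omega
        have h3 : ((t - 2*m*i : ℕ) : ℝ) ≤ m := by exact_mod_cast h2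
        linarith
  · have h1 : (∑ k ∈ Finset.range (2*m*(i+1)), g α k)
        = (∑ k ∈ Finset.range t, g α k) + ∑ k ∈ Finset.Ico t (2*m*(i+1)), g α k := by
      simp only [Finset.range_eq_Ico]
      exact (Finset.sum_Ico_consecutive _ (Nat.zero_le _) hle2).symm
    have h2 := sum_range_block hm b hb (i+1)
    have h3 : ∑ k ∈ Finset.range t, g α k = - ∑ k ∈ Finset.Ico t (2*m*(i+1)), g α k := by
      rw [h2] at h1; linarith
    rw [h3, abs_neg]
    calc |∑ k ∈ Finset.Ico t (2*m*(i+1)), g α k| ≤ ((2*m*(i+1) - t : ℕ) : ℝ) / 2 :=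
        abs_sum_g_le α _ _
      _ ≤ (m:ℝ)/2 := by
        have h4 : (2*m*(i+1) - t : ℕ) ≤ m := by omega
        have h5 : ((2*m*(i+1) - t : ℕ) : ℝ) ≤ m := by exact_mod_cast h4
        linarith

end Stmt9Aux

namespace Stmt9Aux

lemma blockSeq_mem (M : ℕ) (hM : 0 < M) (j : ℕ) (b : Fin j → (Fin (2*M) → Bool))
    (hb : ∀ i, ones (b i) = M) : blockSeq M j hM b ∈ SigmaM M := by
  intro p q hpq
  set α := blockSeq M j hM b with hα
  show |∑ k ∈ Finset.Icc p q, g α k| ≤ M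
  have hIcc : Finset.Icc p q = Finset.Ico p (q+1) := by rw [Finset.Ico_add_one_right_eq_Icc]
  have hsplit : (∑ k ∈ Finset.range (q+1), g α k)
      = (∑ k ∈ Finset.range p, g α k) + ∑ k ∈ Finset.Ico p (q+1), g α k := by
    simp only [Finset.range_eq_Ico]
    exact (Finset.sum_Ico_consecutive _ (Nat.zero_le _) (by omega)).symm
  have h1 := abs_sum_range_le hM b hb (q+1)
  have h2 := abs_sum_range_le hM b hb p
  rw [hIcc]
  have : ∑ k ∈ Finset.Ico p (q+1), g α k
      = (∑ k ∈ Finset.range (q+1), g α k) - ∑ k ∈ Finset.range p, g α k := by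
    rw [hsplit]; ring
  rw [this]
  calc |(∑ k ∈ Finset.range (q+1), g α k) - ∑ k ∈ Finset.range p, g α k|
      ≤ |∑ k ∈ Finset.range (q+1), g α k| + |∑ k ∈ Finset.range p, g α k| := abs_sub _ _
    _ ≤ (M:ℝ)/2 + (M:ℝ)/2 := add_le_add h1 h2
    _ = M := by ring

lemma wordCount_pos (M : ℕ) (hM : 0 < M) (n : ℕ) : 0 < wordCount (SigmaM M) n := by
  rw [wordCount]
  have : Nonempty {w : Fin n → Bool // ∃ α ∈ SigmaM M, ∀ i : Fin n, α (i : ℕ) = w i} := by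
    refine ⟨⟨fun i => blockSeq M 0 hM Fin.elim0 i.val,
      blockSeq M 0 hM Fin.elim0, blockSeq_mem M hM 0 Fin.elim0 (fun i => i.elim0), fun i => rfl⟩⟩
  exact Nat.card_pos

lemma wordCount_le (X : Set (ℕ → Bool)) (n : ℕ) : wordCount X n ≤ 2^n := by
  rw [wordCount]
  calc Nat.card {w : Fin n → Bool // ∃ α ∈ X, ∀ i : Fin n, α (i : ℕ) = w i}
      ≤ Nat.card (Fin n → Bool) :=
        Nat.card_le_card_of_injective Subtype.val Subtype.val_injective
    _ = 2^n := by rw [Nat.card_fun, Nat.card_eq_fintype_card, Nat.card_eq_fintype_card,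
        Fintype.card_fin, Fintype.card_bool]

lemma choose_pow_le_wordCount (M j : ℕ) (hM : 0 < M) :
    ((2*M).choose M)^j ≤ wordCount (SigmaM M) (2*M*j) := by
  set n := 2*M*j with hn
  have hlt : ∀ (i : Fin j) (r : Fin (2*M)), 2*M*i.val + r.val < n := by
    intro i r
    have h1 : 2*M*(i.val+1) ≤ 2*M*j := Nat.mul_le_mul_left _ i.isLt
    have h2 : 2*M*(i.val+1) = 2*M*i.val + 2*M := by ring
    have := r.isLt
    omega
  let F : (Fin j → {w : Fin (2*M) → Bool // ones w = M}) →
      {w : Fin n → Bool // ∃ α ∈ SigmaM M, ∀ i : Fin n, α (i : ℕ) = w i} :=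
    fun b => ⟨fun i => blockSeq M j hM (fun t => (b t).1) i.val,
      blockSeq M j hM (fun t => (b t).1),
      blockSeq_mem M hM j _ (fun i => (b i).2), fun i => rfl⟩
  have key : ∀ (b : Fin j → {w : Fin (2*M) → Bool // ones w = M}) (i : Fin j) (r : Fin (2*M)),
      (F b).1 ⟨2*M*i.val + r.val, hlt i r⟩ = (b i).1 r := by
    intro b i r
    show blockSeq M j hM (fun t => (b t).1) (2*M*i.val + r.val) = _
    rw [blockSeq_apply hM _ i.val r.val r.isLt]
    simp [blockFun, i.isLt]
  have hinj : Function.Injective F := by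
    intro b b' h
    funext i
    apply Subtype.ext
    funext r
    rw [← key b i r, ← key b' i r, h]
  calc ((2*M).choose M)^j = Nat.card (Fin j → {w : Fin (2*M) → Bool // ones w = M}) := by
        rw [Nat.card_fun, Nat.card_eq_fintype_card (α := Fin j), Fintype.card_fin,
          card_balanced]
    _ ≤ _ := Nat.card_le_card_of_injective F hinj

end Stmt9Aux

namespace Stmt9Aux

lemma f_nonneg (X : Set (ℕ → Bool)) (n : ℕ) : 0 ≤ Real.log (wordCount X n) / n :=
  div_nonneg (Real.log_natCast_nonneg _) (Nat.cast_nonneg n)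

lemma f_le (X : Set (ℕ → Bool)) (n : ℕ) :
    Real.log (wordCount X n) / n ≤ Real.log 2 := by
  rcases Nat.eq_zero_or_pos n with rfl | hn
  · simpa using Real.log_nonneg one_le_two
  have h1 : Real.log (wordCount X n) ≤ n * Real.log 2 := by
    rcases Nat.eq_zero_or_pos (wordCount X n) with h | h
    · rw [h]
      simpa using mul_nonneg (Nat.cast_nonneg n) (Real.log_nonneg one_le_two)
    · calc Real.log (wordCount X n) ≤ Real.log ((2^n : ℕ)) := by
            apply Real.log_le_log (by exact_mod_cast h) (by exact_mod_cast wordCount_le X n)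
        _ = n * Real.log 2 := by push_cast; rw [Real.log_pow]
  rw [div_le_iff₀ (by exact_mod_cast hn)]
  linarith [h1]

lemma entropy_le (X : Set (ℕ → Bool)) : subshiftEntropy X ≤ Real.log 2 := by
  apply Filter.limsup_le_of_le
    (Filter.isCoboundedUnder_le_of_le _ (fun n => f_nonneg X n))
    (Filter.Eventually.of_forall (fun n => f_le X n))

lemma le_entropy (M : ℕ) (hM : 0 < M) :
    Real.log ((2*M).choose M) / (2*M) ≤ subshiftEntropy (SigmaM M) := by
  apply Filter.le_limsup_of_frequently_le _ (Filter.isBoundedUnder_of ⟨Real.log 2, f_le _⟩)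
  have htd : Filter.Tendsto (fun j : ℕ => 2*M*j) Filter.atTop Filter.atTop :=
    Filter.tendsto_atTop_mono (fun jj => Nat.le_mul_of_pos_left jj (by omega)) Filter.tendsto_id
  refine htd.frequently (((Filter.eventually_ge_atTop 1).mono ?_).frequently)
  intro j hj
  have hjpos : 0 < j := hj
  have hchoose : 0 < (2*M).choose M := Nat.choose_pos (by omega)
  have hcount := choose_pow_le_wordCount M j hM
  have hwpos : 0 < wordCount (SigmaM M) (2*M*j) := wordCount_pos M hM _
  have hlog : (j:ℝ) * Real.log ((2*M).choose M)
      ≤ Real.log (wordCount (SigmaM M) (2*M*j)) := by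
    rw [← Real.log_pow]
    apply Real.log_le_log (by positivity) (by exact_mod_cast hcount)
  have hden : (0:ℝ) < 2*(M:ℝ) := by
    have : (0:ℝ) < (M:ℝ) := by exact_mod_cast hM
    linarith
  have hden2 : (0:ℝ) < ((2*M*j : ℕ) : ℝ) := by
    exact_mod_cast Nat.mul_pos (by omega : 0 < 2*M) hjpos
  rw [div_le_div_iff₀ hden hden2]
  have heq : Real.log ((2*M).choose M) * ((2*M*j : ℕ) : ℝ)
      = ((j:ℝ) * Real.log ((2*M).choose M)) * (2*(M:ℝ)) := by push_cast; ring
  rw [heq]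
  exact mul_le_mul_of_nonneg_right hlog (by linarith)

lemma g_tendsto :
    Filter.Tendsto (fun M : ℕ => Real.log ((2*M).choose M) / (2*M)) Filter.atTop
      (nhds (Real.log 2)) := by
  have h4 : Real.log 4 = 2 * Real.log 2 := by
    rw [show (4:ℝ) = 2^2 by norm_num, Real.log_pow]; push_cast; ring
  have hupper : ∀ M : ℕ, Real.log ((2*M).choose M) / (2*M) ≤ Real.log 2 := by
    intro M
    rcases Nat.eq_zero_or_pos M with rfl | hM
    · simpa using Real.log_nonneg one_le_two
    have hMR : (1:ℝ) ≤ (M:ℝ) := by exact_mod_cast hM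
    have h1 : (2*M).choose M ≤ 4^M := by
      calc (2*M).choose M ≤ ∑ i ∈ Finset.range (2*M+1), (2*M).choose i :=
            Finset.single_le_sum (fun i _ => Nat.zero_le _)
              (Finset.mem_range.2 (by omega))
        _ = 2^(2*M) := Nat.sum_range_choose (2*M)
        _ = 4^M := by rw [pow_mul]; norm_num
    have h2 : Real.log ((2*M).choose M) ≤ (M:ℝ) * Real.log 4 := by
      calc Real.log ((2*M).choose M) ≤ Real.log ((4^M : ℕ)) :=
            Real.log_le_log (by exact_mod_cast Nat.choose_pos (by omega : M ≤ 2*M))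
              (by exact_mod_cast h1)
        _ = (M:ℝ) * Real.log 4 := by push_cast; rw [Real.log_pow]
    rw [div_le_iff₀ (by linarith : (0:ℝ) < 2*(M:ℝ))]
    rw [h4] at h2
    nlinarith [h2]
  have hlower : ∀ M : ℕ, 0 < M →
      Real.log 2 - Real.log (2*M+1) / (2*M) ≤ Real.log ((2*M).choose M) / (2*M) := by
    intro M hM
    have hMR : (1:ℝ) ≤ (M:ℝ) := by exact_mod_cast hM
    have h1 : (4:ℕ)^M ≤ (2*M+1) * (2*M).choose M :=
      Nat.four_pow_le_two_mul_add_one_mul_central_binom M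
    have hc : (0:ℝ) < ((2*M).choose M : ℝ) := by
      exact_mod_cast Nat.choose_pos (by omega : M ≤ 2*M)
    have h2 : (M:ℝ) * Real.log 4 ≤ Real.log (2*(M:ℝ)+1) + Real.log ((2*M).choose M) := by
      calc (M:ℝ) * Real.log 4 = Real.log ((4^M : ℕ)) := by push_cast; rw [Real.log_pow]
        _ ≤ Real.log (((2*M+1) * (2*M).choose M : ℕ)) :=
            Real.log_le_log (by positivity) (by exact_mod_cast h1)
        _ = Real.log (2*(M:ℝ)+1) + Real.log ((2*M).choose M) := by
            push_cast
            rw [Real.log_mul (by linarith) (ne_of_gt hc)]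
    rw [h4] at h2
    have heq : Real.log 2 - Real.log (2*(M:ℝ)+1)/(2*(M:ℝ))
        = ((M:ℝ)*(2*Real.log 2) - Real.log (2*(M:ℝ)+1))/(2*(M:ℝ)) := by
      field_simp
    rw [heq, div_le_div_iff₀ (by linarith) (by linarith)]
    nlinarith [h2]
  -- the error term tends to zero
  have herr : Filter.Tendsto (fun M : ℕ => Real.log (2*M+1) / (2*M)) Filter.atTop (nhds 0) := by
    have hlog : Filter.Tendsto (fun x : ℝ => Real.log x / x) Filter.atTop (nhds 0) :=
      Real.isLittleO_log_id_atTop.tendsto_div_nhds_zero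
    have hcomp : Filter.Tendsto (fun M : ℕ => ((2*M+1 : ℕ) : ℝ)) Filter.atTop Filter.atTop := by
      apply tendsto_natCast_atTop_atTop.comp
      exact Filter.tendsto_atTop_mono (fun M => by simp only [id_eq]; omega) Filter.tendsto_id
    have h0 : Filter.Tendsto (fun M : ℕ => Real.log (2*(M:ℝ)+1) / (2*(M:ℝ)+1))
        Filter.atTop (nhds 0) := by
      refine (hlog.comp hcomp).congr fun M => ?_
      simp only [Function.comp]
      push_cast
      ring
    apply squeeze_zero
      (g := fun M : ℕ => 2 * (Real.log (2*(M:ℝ)+1) / (2*(M:ℝ)+1)))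
      (fun M => ?_) (fun M => ?_) (by simpa using h0.const_mul 2)
    · have h1 : (0:ℝ) ≤ (M:ℝ) := Nat.cast_nonneg M
      exact div_nonneg (Real.log_nonneg (by linarith)) (by linarith)
    · rcases Nat.eq_zero_or_pos M with rfl | hM
      · norm_num
      have hMR : (1:ℝ) ≤ (M:ℝ) := by exact_mod_cast hM
      have hlogpos : 0 ≤ Real.log (2*(M:ℝ)+1) := Real.log_nonneg (by linarith)
      show Real.log (2*(M:ℝ)+1)/(2*(M:ℝ)) ≤ 2*(Real.log (2*(M:ℝ)+1)/(2*(M:ℝ)+1))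
      rw [show (2:ℝ)*(Real.log (2*(M:ℝ)+1)/(2*(M:ℝ)+1))
          = (2*Real.log (2*(M:ℝ)+1))/(2*(M:ℝ)+1) by ring]
      rw [div_le_div_iff₀ (by linarith) (by linarith)]
      nlinarith [mul_nonneg hlogpos (by linarith : (0:ℝ) ≤ 2*(M:ℝ)-1)]
  have hl : Filter.Tendsto (fun M : ℕ => Real.log 2 - Real.log (2*M+1) / (2*M))
      Filter.atTop (nhds (Real.log 2)) := by
    simpa using (tendsto_const_nhds (x := Real.log 2)).sub herr
  apply tendsto_of_tendsto_of_tendsto_of_le_of_le' hl tendsto_const_nhds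
  · exact Filter.eventually_atTop.2 ⟨1, fun M hM => hlower M hM⟩
  · exact Filter.Eventually.of_forall hupper

lemma main :
    Filter.Tendsto (fun M : ℕ => subshiftEntropy (SigmaM M))
      Filter.atTop (nhds (Real.log 2)) := by
  apply tendsto_of_tendsto_of_tendsto_of_le_of_le' g_tendsto tendsto_const_nhds
  · exact Filter.eventually_atTop.2 ⟨1, fun M hM => le_entropy M hM⟩
  · exact Filter.Eventually.of_forall (fun M => entropy_le _)

end Stmt9Aux

/-- The topological entropy of `Σ_M` converges to `log 2` as `M → ∞`. -/
theorem stmt_9 :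
    Filter.Tendsto (fun M : ℕ => subshiftEntropy (SigmaM M))
      Filter.atTop (nhds (Real.log 2)) := Stmt9Aux.main
end

section
/- If μ is an ergodic shift-invariant probability measure on the full 2-shift {0,1}^ℕ with measure-theoretic entropy equal to log 2, then μ is the (1/2, 1/2)-Bernoulli measure. -/
open MeasureTheory

/-- The cylinder set determined by a finite word `w`. -/
def cyl {n : ℕ} (w : Fin n → Bool) : Set (ℕ → Bool) :=
  {α | ∀ i : Fin n, α (i : ℕ) = w i}

/-- The Kolmogorov–Sinai entropy of a shift-invariant measure on `{0,1}^ℕ`,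
computed with the natural generating partition into cylinders:
`h = inf_n (1/n)·∑_{w : word of length n} −μ(cyl w)·log μ(cyl w)`. -/
noncomputable def shiftEntropy (μ : Measure (ℕ → Bool)) : ℝ :=
  ⨅ n : ℕ, (∑ w : Fin (n + 1) → Bool, Real.negMulLog (μ (cyl w)).toReal) / (n + 1)

lemma key_le {a p : ℝ} (ha : 0 < a) (hp : 0 ≤ p) :
    Real.negMulLog p ≤ a - p - p * Real.log a := by
  rcases eq_or_lt_of_le hp with h | h
  · simp [← h, Real.negMulLog, ha.le]
  · have h1 : Real.log (a / p) ≤ a / p - 1 := Real.log_le_sub_one_of_pos (by positivity)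
    have h2 : Real.log (a / p) = Real.log a - Real.log p := Real.log_div ha.ne' h.ne'
    have h3 := mul_le_mul_of_nonneg_left h1 h.le
    rw [h2] at h3
    have hpa : p * (a / p - 1) = a - p := by field_simp
    rw [Real.negMulLog]
    nlinarith

lemma key_eq {a p : ℝ} (ha : 0 < a) (hp : 0 ≤ p)
    (h : Real.negMulLog p = a - p - p * Real.log a) : p = a := by
  by_contra hne
  rcases eq_or_lt_of_le hp with h0 | h0
  · rw [← h0] at h
    simp [Real.negMulLog] at h
    exact hne (h0.symm.trans h)
  · have hx : a / p ≠ 1 := by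
      intro hh
      rw [div_eq_one_iff_eq h0.ne'] at hh
      exact hne hh.symm
    have h1 : Real.log (a / p) < a / p - 1 := Real.log_lt_sub_one_of_pos (by positivity) hx
    have h2 : Real.log (a / p) = Real.log a - Real.log p := Real.log_div ha.ne' h0.ne'
    have h3 := mul_lt_mul_of_pos_left h1 h0
    rw [h2] at h3
    have hpa : p * (a / p - 1) = a - p := by field_simp
    rw [Real.negMulLog] at h
    nlinarith

lemma cyl_measurable {n : ℕ} (w : Fin n → Bool) : MeasurableSet (cyl w) := by
  have : cyl w = ⋂ i : Fin n, (fun α : ℕ → Bool => α (i : ℕ)) ⁻¹' {w i} := by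
    ext α; simp [cyl]
  rw [this]
  exact MeasurableSet.iInter fun i => (measurable_pi_apply _) (measurableSet_singleton _)

lemma cyl_disjoint {n : ℕ} {w v : Fin n → Bool} (h : w ≠ v) : Disjoint (cyl w) (cyl v) := by
  rw [Set.disjoint_left]
  intro α hw hv
  exact h (funext fun i => (hw i).symm.trans (hv i))

lemma sum_cyl (μ : Measure (ℕ → Bool)) [IsProbabilityMeasure μ] (n : ℕ) :
    ∑ w : Fin n → Bool, μ (cyl w) = 1 := by
  have hU : ⋃ w ∈ (Finset.univ : Finset (Fin n → Bool)), cyl w = Set.univ := by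
    ext α
    simp only [Set.mem_iUnion, Set.mem_univ, iff_true]
    exact ⟨fun i => α (i : ℕ), Finset.mem_univ _, fun i => rfl⟩
  have hd : ((Finset.univ : Finset (Fin n → Bool)) : Set (Fin n → Bool)).PairwiseDisjoint cyl :=
    fun w _ v _ hne => cyl_disjoint hne
  calc ∑ w : Fin n → Bool, μ (cyl w)
      = μ (⋃ w ∈ (Finset.univ : Finset (Fin n → Bool)), cyl w) :=
        (measure_biUnion_finset hd fun w _ => cyl_measurable w).symm
    _ = 1 := by rw [hU, measure_univ]

/-- An ergodic shift-invariant probability measure on the full `2`-shift with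
entropy `log 2` is the `(1/2, 1/2)`-Bernoulli measure (i.e. gives every cylinder
of length `n` measure `2⁻ⁿ`). -/
theorem stmt_10 (μ : Measure (ℕ → Bool)) [IsProbabilityMeasure μ]
    (herg : Ergodic (fun α n => α (n + 1)) μ)
    (hent : shiftEntropy μ = Real.log 2) :
    ∀ (n : ℕ) (w : Fin n → Bool), μ (cyl w) = (2 : ENNReal)⁻¹ ^ n := by
  intro n
  induction n with
  | zero =>
    intro w
    have : cyl w = Set.univ := by
      ext α
      simp only [cyl, Set.mem_setOf_eq, Set.mem_univ, iff_true]
      exact fun i => i.elim0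
    simp [this]
  | succ m _ =>
    -- The probabilities of cylinders of length m+1
    set N : ℕ := m + 1 with hN
    set p : (Fin N → Bool) → ℝ := fun w => (μ (cyl w)).toReal with hp
    set a : ℝ := ((2 : ℝ) ^ N)⁻¹ with ha
    have ha0 : (0 : ℝ) < a := by positivity
    have hpnn : ∀ w, 0 ≤ p w := fun w => ENNReal.toReal_nonneg
    have hsum : ∑ w : Fin N → Bool, p w = 1 := by
      rw [hp, ← ENNReal.toReal_sum fun w _ => measure_ne_top μ _, sum_cyl]
      simp
    have hcard : (Finset.univ : Finset (Fin N → Bool)).card = 2 ^ N := by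
      simp [Finset.card_univ]
    -- lower bound from the entropy hypothesis
    have hbdd : BddBelow (Set.range fun k : ℕ =>
        (∑ w : Fin (k + 1) → Bool, Real.negMulLog (μ (cyl w)).toReal) / (k + 1)) := by
      refine ⟨0, ?_⟩
      rintro x ⟨k, rfl⟩
      apply div_nonneg _ (by positivity)
      refine Finset.sum_nonneg fun w _ => Real.negMulLog_nonneg ENNReal.toReal_nonneg ?_
      simpa using ENNReal.toReal_mono ENNReal.one_ne_top prob_le_one
    have hlow : Real.log 2 ≤ (∑ w : Fin N → Bool, Real.negMulLog (p w)) / ((m : ℝ) + 1) := by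
      have := ciInf_le hbdd m
      rw [← shiftEntropy, hent] at this
      exact_mod_cast this
    have hNpos : (0 : ℝ) < (m : ℝ) + 1 := by positivity
    have hlow' : ((m : ℝ) + 1) * Real.log 2 ≤ ∑ w : Fin N → Bool, Real.negMulLog (p w) := by
      rw [mul_comm]
      exact (le_div_iff₀ hNpos).mp hlow
    -- upper bound from Gibbs' inequality
    have hloga : Real.log a = -(((m : ℝ) + 1) * Real.log 2) := by
      rw [ha, Real.log_inv, Real.log_pow]
      push_cast [hN]
      ring
    have hrhs : ∑ w : Fin N → Bool, (a - p w - p w * Real.log a)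
        = ((m : ℝ) + 1) * Real.log 2 := by
      rw [Finset.sum_sub_distrib, Finset.sum_sub_distrib, ← Finset.sum_mul, hsum,
        Finset.sum_const, hcard, hloga]
      rw [ha]
      have : (2 : ℝ) ^ N ≠ 0 := by positivity
      field_simp
      rw [nsmul_eq_mul, Nat.cast_pow, Nat.cast_ofNat, mul_one_div_cancel this]
      ring
    have hle : ∀ w ∈ (Finset.univ : Finset (Fin N → Bool)),
        Real.negMulLog (p w) ≤ a - p w - p w * Real.log a :=
      fun w _ => key_le ha0 (hpnn w)
    have hsum_eq : ∑ w : Fin N → Bool, Real.negMulLog (p w)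
        = ∑ w : Fin N → Bool, (a - p w - p w * Real.log a) := by
      have h1 : ∑ w : Fin N → Bool, Real.negMulLog (p w)
          ≤ ((m : ℝ) + 1) * Real.log 2 := hrhs ▸ Finset.sum_le_sum hle
      rw [hrhs]
      linarith
    have heach := (Finset.sum_eq_sum_iff_of_le hle).mp hsum_eq
    intro w
    have hpw : p w = a := key_eq ha0 (hpnn w) (heach w (Finset.mem_univ w))
    have hfin : μ (cyl w) ≠ ⊤ := measure_ne_top μ _
    have htarget : ((2 : ENNReal)⁻¹ ^ N).toReal = a := by
      rw [ha]
      simp [ENNReal.toReal_pow, ← inv_pow]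
    refine (ENNReal.toReal_eq_toReal_iff' hfin ?_).mp (by rw [htarget]; exact hpw)
    exact ENNReal.pow_ne_top (by simp)
end

section
/- Define x : {0,1}^ℕ → ℝ by x(α) = −(19/20)·∑_{n≥0} s_n / 20^n where s_n = ∏_{k=0}^{n} σ(α_k) and σ(0) = 1, σ(1) = −1 (so the sign alternates according to the digits). Then x is injective and continuous, and x(α) ∈ [−1, 1] for all α. -/
/-- The map `x(α) = −(19/20)·∑_{n≥0} s_n/20ⁿ`, where
`s_n = ∏_{k=0}^{n} σ(α_k)` with `σ(0) = 1`, `σ(1) = −1`. -/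
noncomputable def xcode (α : ℕ → Bool) : ℝ :=
  -(19/20) * ∑' n : ℕ,
    (∏ k ∈ Finset.range (n + 1), (if α k then (-1 : ℝ) else 1)) / 20 ^ n

noncomputable def xterm (α : ℕ → Bool) (n : ℕ) : ℝ :=
  (∏ k ∈ Finset.range (n + 1), (if α k then (-1 : ℝ) else 1)) / 20 ^ n

lemma abs_fac (α : ℕ → Bool) (n : ℕ) :
    |(∏ k ∈ Finset.range (n + 1), (if α k then (-1 : ℝ) else 1))| = 1 := by
  rw [Finset.abs_prod]
  exact Finset.prod_eq_one fun k _ => by split <;> simp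

lemma norm_xterm (α : ℕ → Bool) (n : ℕ) : ‖xterm α n‖ = (1/20 : ℝ) ^ n := by
  rw [xterm, norm_div, Real.norm_eq_abs, Real.norm_eq_abs, abs_fac, abs_pow, div_pow]
  norm_num

lemma summ (α : ℕ → Bool) : Summable (xterm α) := by
  apply Summable.of_norm
  simp only [norm_xterm]
  exact summable_geometric_of_lt_one (by norm_num) (by norm_num)

lemma xcode_eq (α : ℕ → Bool) : xcode α = -(19/20) * ∑' n, xterm α n := rfl

/-- `xcode` is injective, continuous, and takes values in `[−1, 1]`. -/
theorem stmt_15 :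
    Function.Injective xcode ∧ Continuous xcode ∧
    ∀ α, xcode α ∈ Set.Icc (-1 : ℝ) 1 := by
  have hsum20 : Summable (fun n : ℕ => (1/20 : ℝ) ^ n) :=
    summable_geometric_of_lt_one (by norm_num) (by norm_num)
  refine ⟨?_, ?_, ?_⟩
  · -- injectivity
    intro α β hxy
    by_contra hne
    have hex : ∃ n, α n ≠ β n := Function.ne_iff.mp hne
    set m := Nat.find hex with hm
    have hspec : α m ≠ β m := Nat.find_spec hex
    have hmin : ∀ k < m, α k = β k := fun k hk => by
      by_contra h; exact Nat.find_min hex hk h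
    -- the tsums are equal
    have hts : ∑' n, xterm α n = ∑' n, xterm β n := by
      have := hxy
      rw [xcode_eq, xcode_eq] at this
      exact mul_left_cancel₀ (by norm_num) this
    set g : ℕ → ℝ := fun n => xterm α n - xterm β n with hg
    have hgsum : Summable g := (summ α).sub (summ β)
    have hgts : ∑' n, g n = 0 := by
      simp only [hg]
      rw [Summable.tsum_sub (summ α) (summ β), hts, sub_self]
    -- g vanishes below m
    have hg0 : ∀ i < m, g i = 0 := by
      intro i hi
      have : xterm α i = xterm β i := by
        unfold xterm
        congr 1
        exact Finset.prod_congr rfl fun k hk => by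
          rw [hmin k (lt_of_lt_of_le (Finset.mem_range.mp hk) hi)]
      simp [hg, this]
    -- value at m
    have hprod : (∏ k ∈ Finset.range (m + 1), (if α k then (-1 : ℝ) else 1)) =
        -(∏ k ∈ Finset.range (m + 1), (if β k then (-1 : ℝ) else 1)) := by
      rw [Finset.prod_range_succ, Finset.prod_range_succ]
      have hpre : (∏ k ∈ Finset.range m, (if α k then (-1 : ℝ) else 1)) =
          ∏ k ∈ Finset.range m, (if β k then (-1 : ℝ) else 1) :=
        Finset.prod_congr rfl fun k hk => by rw [hmin k (Finset.mem_range.mp hk)]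
      rw [hpre]
      cases hα : α m <;> cases hβ : β m <;> simp_all
    have hgm : |g m| = 2 * (1/20 : ℝ) ^ m := by
      have : g m = -2 * (∏ k ∈ Finset.range (m + 1), (if β k then (-1 : ℝ) else 1)) / 20 ^ m := by
        simp only [hg, xterm, hprod]
        ring
      rw [this, abs_div, abs_mul]
      rw [show |(-2 : ℝ)| = 2 by norm_num, abs_fac, abs_pow]
      norm_num [div_pow, div_eq_mul_inv]
    -- split the tsum
    have hsplit := Summable.sum_add_tsum_nat_add (f := g) (m + 1) hgsum
    have hfin : ∑ i ∈ Finset.range (m + 1), g i = g m := by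
      rw [Finset.sum_range_succ]
      rw [Finset.sum_eq_zero (fun i hi => hg0 i (Finset.mem_range.mp hi))]
      ring
    have hT : g m = -∑' i, g (i + (m + 1)) := by
      have := hsplit
      rw [hgts, hfin] at this
      linarith
    -- bound the tail
    have htail_sum : Summable (fun i => g (i + (m + 1))) :=
      ((summable_nat_add_iff (m+1)).mpr hgsum)
    have hb : ∀ i : ℕ, ‖g (i + (m + 1))‖ ≤ 2 * (1/20 : ℝ) ^ (i + (m + 1)) := by
      intro i
      calc ‖g (i + (m+1))‖ ≤ ‖xterm α (i + (m+1))‖ + ‖xterm β (i + (m+1))‖ :=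
            norm_sub_le _ _
        _ = 2 * (1/20 : ℝ) ^ (i + (m + 1)) := by
            rw [norm_xterm, norm_xterm]; ring
    have hbs : Summable (fun i : ℕ => 2 * (1/20 : ℝ) ^ (i + (m + 1))) := by
      apply Summable.mul_left
      exact (summable_nat_add_iff (m+1)).mpr hsum20
    have hns : Summable (fun i => ‖g (i + (m + 1))‖) :=
      Summable.of_nonneg_of_le (fun i => norm_nonneg _) hb hbs
    have hbound : |g m| ≤ 2 * (1/20 : ℝ) ^ (m + 1) * (20/19) := by
      rw [hT, abs_neg, ← Real.norm_eq_abs]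
      calc ‖∑' i, g (i + (m + 1))‖ ≤ ∑' i, ‖g (i + (m + 1))‖ :=
            norm_tsum_le_tsum_norm hns
        _ ≤ ∑' i, 2 * (1/20 : ℝ) ^ (i + (m + 1)) := Summable.tsum_le_tsum hb hns hbs
        _ = 2 * (1/20 : ℝ) ^ (m + 1) * (20/19) := by
            have he : ∀ i : ℕ, 2 * (1/20 : ℝ) ^ (i + (m + 1)) =
                (2 * (1/20 : ℝ) ^ (m + 1)) * (1/20) ^ i := by
              intro i; rw [pow_add]; ring
            simp only [he]
            rw [tsum_mul_left, tsum_geometric_of_lt_one (by norm_num) (by norm_num)]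
            norm_num
    rw [hgm] at hbound
    have hx : (0:ℝ) < (1/20:ℝ)^m := by positivity
    have hps : (1/20:ℝ)^(m+1) = (1/20)^m * (1/20) := pow_succ _ _
    nlinarith
  · -- continuity
    have : Continuous fun α => ∑' n, xterm α n := by
      apply continuous_tsum (u := fun n => (1/20 : ℝ) ^ n)
      · intro n
        apply Continuous.div_const
        apply continuous_finset_prod
        intro k _
        exact Continuous.comp (g := fun b : Bool => if b then (-1:ℝ) else 1)
          continuous_of_discreteTopology (continuous_apply k)
      · exact hsum20
      · intro n α; rw [norm_xterm]
    exact (continuous_const.mul this)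
  · -- bounds
    intro α
    rw [Set.mem_Icc, ← abs_le]
    have h1 : |∑' n, xterm α n| ≤ 20/19 := by
      rw [← Real.norm_eq_abs]
      calc ‖∑' n, xterm α n‖ ≤ ∑' n, ‖xterm α n‖ := norm_tsum_le_tsum_norm (by
            simp only [norm_xterm]; exact hsum20)
        _ = ∑' n, (1/20 : ℝ) ^ n := by simp only [norm_xterm]
        _ = 20/19 := by
            rw [tsum_geometric_of_lt_one (by norm_num) (by norm_num)]; norm_num
    rw [xcode_eq, abs_mul]
    rw [show |(-(19/20) : ℝ)| = 19/20 by norm_num]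
    nlinarith [abs_nonneg (∑' n, xterm α n)]
end
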